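/- Let (a_n)_{n≥0} and (b_n)_{n≥0} be sequences of complex numbers and, for n ≥ 0, let A_n be the linear operator on ℂ² given by the companion matrix A_n = [[0, 1], [b_n, a_n]] (so A_n(z₁,z₂) = (z₂, b_n z₁ + a_n z₂)). Assume the sequence (A_n)_{n≥0} admits an exponential dichotomy on ℤ₀⁺ with constants C, λ > 0. Then the linear recurrence x_{n+2} = a_n x_{n+1} + b_n x_n, n ≥ 0, has the ℓ^∞-Lipschitz shadowing property: there exists L > 0 such that for every ε > 0 and every sequence (w_n)_{n≥0} ⊂ ℂ with sup_{n≥0} |w_{n+2} − a_n w_{n+1} − b_n w_n| ≤ Lε, there exists a sequence (x_n)_{n≥0} ⊂ ℂ with x_{n+2} = a_n x_{n+1} + b_n x_n for all n ≥ 0 and sup_{n≥0} |x_n − w_n| ≤ ε. -/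

import Mathlib

/-- The forward products `𝒜(m,n) = A_{m-1} ⋯ A_n` for `m ≥ n ≥ 0`
(equal to the identity when `m ≤ n`). -/
noncomputable def calAN {X : Type*} [NormedAddCommGroup X] [NormedSpace ℂ X]
    (A : ℕ → X →L[ℂ] X) (m n : ℕ) : X →L[ℂ] X :=
  (List.range (m - n)).foldl (fun B k => (A (n + k)).comp B)
    (ContinuousLinearMap.id ℂ X)

/-- The sequence `(A_m)_{m ≥ 0}` admits an exponential dichotomy on `ℤ₀⁺` with constants
`C, lam > 0`.  For `m ≤ n`, the operator `𝒜(m,n)` (the inverse of `𝒜(n,m)` restricted to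
`Ker P_m`) is described implicitly: `w = 𝒜(m,n)(Id - P_n) x` iff `w ∈ Ker P_m` and
`𝒜(n,m) w = x - P_n x`. -/
def ExpDichotomyN {X : Type*} [NormedAddCommGroup X] [NormedSpace ℂ X]
    (A : ℕ → X →L[ℂ] X) (C lam : ℝ) : Prop :=
  ∃ P : ℕ → X →L[ℂ] X,
    (∀ m, (P m).comp (P m) = P m) ∧
    (∀ m, (P (m + 1)).comp (A m) = (A m).comp (P m)) ∧
    (∀ m, Set.BijOn (A m) (LinearMap.ker (P m : X →ₗ[ℂ] X) : Set X)
      (LinearMap.ker (P (m + 1) : X →ₗ[ℂ] X) : Set X)) ∧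
    (∀ m n : ℕ, n ≤ m → ‖(calAN A m n).comp (P n)‖ ≤ C * Real.exp (-lam * ((m : ℝ) - n))) ∧
    (∀ m n : ℕ, m ≤ n → ∀ x w : X, w ∈ LinearMap.ker (P m : X →ₗ[ℂ] X) →
      calAN A n m w = x - P n x → ‖w‖ ≤ C * Real.exp (-lam * ((n : ℝ) - m)) * ‖x‖)

/-!
`(w n, w (n + 1))` solves the companion system `z (n + 1) = A n (z n)` up to the residual
`y n = (0, w (n + 2) - a n * w (n + 1) - b n * w n)`. An exponential dichotomy makes the
inhomogeneous system `v (n + 1) = A n (v n) + y n` solvable with `‖v‖∞ ≤ 2C / (1 - e^{-λ}) ‖y‖∞`,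
by the Green's-function formula
`v n = ∑_{k < n} 𝒜(n, k+1) P_{k+1} y_k - ∑_{k ≥ n} 𝒜(n, k+1) (Id - P_{k+1}) y_k`,
each sum being dominated by a geometric series through one of the two dichotomy estimates.
Then `(w n, w (n + 1)) - v n` is an exact solution of the companion system, whose first
coordinate solves the recurrence and stays within `ε` of `w` for `L = (1 - e^{-λ}) / (2C)`.
-/

open Function Set

theorem Real.exp_neg_mul_natCast_sub {m n : ℕ} (h : n ≤ m) (lam : ℝ) :
    Real.exp (-lam * ((m : ℝ) - n)) = Real.exp (-lam) ^ (m - n) := by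
  rw [← Real.exp_nat_mul, Nat.cast_sub h]
  ring_nf

section Products

variable {X : Type*} [NormedAddCommGroup X] [NormedSpace ℂ X] (A : ℕ → X →L[ℂ] X)

theorem calAN_self (n : ℕ) : calAN A n n = ContinuousLinearMap.id ℂ X := by
  simp [calAN]

theorem calAN_succ_left {m n : ℕ} (h : n ≤ m) :
    calAN A (m + 1) n = (A m).comp (calAN A m n) := by
  unfold calAN
  rw [show m + 1 - n = m - n + 1 by omega, List.range_succ, List.foldl_append,
    List.foldl_cons, List.foldl_nil, Nat.add_sub_cancel' h]

theorem calAN_succ_right {m n : ℕ} (h : n < m) :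
    calAN A m n = (calAN A m (n + 1)).comp (A n) := by
  induction m, h using Nat.le_induction with
  | base => rw [calAN_succ_left A le_rfl, calAN_self, calAN_self]; rfl
  | succ m hm ih => rw [calAN_succ_left A (by omega), ih, calAN_succ_left A hm]; rfl

theorem calAN_bijOn_ker {P : ℕ → X →L[ℂ] X}
    (hbij : ∀ m, BijOn (A m) (LinearMap.ker (P m : X →ₗ[ℂ] X) : Set X)
      (LinearMap.ker (P (m + 1) : X →ₗ[ℂ] X) : Set X))
    {m n : ℕ} (h : n ≤ m) :
    BijOn (calAN A m n) (LinearMap.ker (P n : X →ₗ[ℂ] X) : Set X)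
      (LinearMap.ker (P m : X →ₗ[ℂ] X) : Set X) := by
  induction m, h using Nat.le_induction with
  | base => simpa [calAN_self] using bijOn_id _
  | succ m hm ih =>
    rw [calAN_succ_left A hm, ContinuousLinearMap.coe_comp]
    exact (hbij m).comp ih

end Products

section Dichotomy

variable {X : Type*} [NormedAddCommGroup X] [NormedSpace ℂ X] {A P : ℕ → X →L[ℂ] X}

local notation "𝒦" Q:max => (LinearMap.ker (Q : X →ₗ[ℂ] X) : Set X)

theorem sub_apply_mem_ker_of_comp_self {Q : X →L[ℂ] X} (hQ : Q.comp Q = Q) (x : X) :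
    x - Q x ∈ 𝒦 Q := by
  have hQx : Q (Q x) = Q x := congr($hQ x)
  simp [hQx]

variable (A P) in
/-- The paper's `𝒜(m,n)(Id − P_n)` for `m ≤ n`. -/
noncomputable def unstableBack (m n : ℕ) (x : X) : X :=
  invFunOn (calAN A n m) (𝒦 (P m)) (x - P n x)

theorem unstableBack_mem_ker_and_calAN (hP : ∀ m, (P m).comp (P m) = P m)
    (hbij : ∀ m, BijOn (A m) (𝒦 (P m)) (𝒦 (P (m + 1)))) {m n : ℕ} (h : m ≤ n) (x : X) :
    unstableBack A P m n x ∈ 𝒦 (P m) ∧ calAN A n m (unstableBack A P m n x) = x - P n x := by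
  have hx := (calAN_bijOn_ker A hbij h).surjOn (sub_apply_mem_ker_of_comp_self (hP n) x)
  exact ⟨invFunOn_mem hx, invFunOn_eq hx⟩

theorem unstableBack_eq (hP : ∀ m, (P m).comp (P m) = P m)
    (hbij : ∀ m, BijOn (A m) (𝒦 (P m)) (𝒦 (P (m + 1)))) {m n : ℕ} (h : m ≤ n) {x v : X}
    (hv : v ∈ 𝒦 (P m)) (hAv : calAN A n m v = x - P n x) :
    unstableBack A P m n x = v :=
  let ⟨hmem, hcal⟩ := unstableBack_mem_ker_and_calAN hP hbij h x
  (calAN_bijOn_ker A hbij h).injOn hmem hv (hcal.trans hAv.symm)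

theorem unstableBack_self (hP : ∀ m, (P m).comp (P m) = P m)
    (hbij : ∀ m, BijOn (A m) (𝒦 (P m)) (𝒦 (P (m + 1)))) (n : ℕ) (x : X) :
    unstableBack A P n n x = x - P n x :=
  unstableBack_eq hP hbij le_rfl (sub_apply_mem_ker_of_comp_self (hP n) x) (by simp [calAN_self])

theorem apply_unstableBack (hP : ∀ m, (P m).comp (P m) = P m)
    (hbij : ∀ m, BijOn (A m) (𝒦 (P m)) (𝒦 (P (m + 1)))) {m n : ℕ} (h : m < n) (x : X) :
    A m (unstableBack A P m n x) = unstableBack A P (m + 1) n x := by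
  obtain ⟨hmem, hcal⟩ := unstableBack_mem_ker_and_calAN hP hbij h.le x
  refine (unstableBack_eq hP hbij h ((hbij m).mapsTo hmem) ?_).symm
  rw [← hcal, calAN_succ_right A h, ContinuousLinearMap.comp_apply]

theorem norm_calAN_apply_le {C lam : ℝ}
    (hstable : ∀ m n : ℕ, n ≤ m → ‖(calAN A m n).comp (P n)‖ ≤ C * Real.exp (-lam * ((m : ℝ) - n)))
    {m n : ℕ} (h : n ≤ m) (x : X) :
    ‖calAN A m n (P n x)‖ ≤ C * Real.exp (-lam) ^ (m - n) * ‖x‖ := by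
  rw [← Real.exp_neg_mul_natCast_sub h, ← ContinuousLinearMap.comp_apply]
  exact ((calAN A m n).comp (P n)).le_of_opNorm_le (hstable m n h) x

theorem norm_unstableBack_le (hP : ∀ m, (P m).comp (P m) = P m)
    (hbij : ∀ m, BijOn (A m) (𝒦 (P m)) (𝒦 (P (m + 1)))) {C lam : ℝ}
    (hunstable : ∀ m n : ℕ, m ≤ n → ∀ x w : X, w ∈ 𝒦 (P m) →
      calAN A n m w = x - P n x → ‖w‖ ≤ C * Real.exp (-lam * ((n : ℝ) - m)) * ‖x‖)
    {m n : ℕ} (h : m ≤ n) (x : X) :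
    ‖unstableBack A P m n x‖ ≤ C * Real.exp (-lam) ^ (n - m) * ‖x‖ := by
  rw [← Real.exp_neg_mul_natCast_sub h]
  exact hunstable m n h x _ (unstableBack_mem_ker_and_calAN hP hbij h x).1
    (unstableBack_mem_ker_and_calAN hP hbij h x).2

variable (A P) in
noncomputable def stableSum (y : ℕ → X) (n : ℕ) : X :=
  ∑ k ∈ Finset.range n, calAN A n (k + 1) (P (k + 1) (y k))

variable (A P) in
noncomputable def unstableSum (y : ℕ → X) (n : ℕ) : X :=
  ∑' j, unstableBack A P n (n + j + 1) (y (n + j))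

theorem stableSum_succ (y : ℕ → X) (n : ℕ) :
    stableSum A P y (n + 1) = A n (stableSum A P y n) + P (n + 1) (y n) := by
  simp only [stableSum, Finset.sum_range_succ, calAN_self, map_sum]
  congr 1
  refine Finset.sum_congr rfl fun k hk => ?_
  rw [calAN_succ_left A (Finset.mem_range.mp hk), ContinuousLinearMap.comp_apply]

variable {C lam M : ℝ} {y : ℕ → X} {n : ℕ}

theorem norm_stableSum_le
    (hstable : ∀ m n : ℕ, n ≤ m → ‖(calAN A m n).comp (P n)‖ ≤ C * Real.exp (-lam * ((m : ℝ) - n)))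
    (hC : 0 ≤ C) (hlam : 0 < lam) (hy : ∀ k, ‖y k‖ ≤ M) (n : ℕ) :
    ‖stableSum A P y n‖ ≤ C * M / (1 - Real.exp (-lam)) := by
  set r := Real.exp (-lam)
  have hr : r < 1 := Real.exp_lt_one_iff.mpr (by linarith)
  have hterm : ∀ k ∈ Finset.range n,
      ‖calAN A n (k + 1) (P (k + 1) (y k))‖ ≤ C * M * r ^ (n - 1 - k) := by
    intro k hk
    rw [show n - 1 - k = n - (k + 1) by omega, mul_right_comm]
    exact (norm_calAN_apply_le hstable (Finset.mem_range.mp hk) _).trans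
      (mul_le_mul_of_nonneg_left (hy k) (by positivity))
  calc ‖stableSum A P y n‖ ≤ ∑ k ∈ Finset.range n, C * M * r ^ (n - 1 - k) :=
        norm_sum_le_of_le _ hterm
    _ = C * M * ∑ k ∈ Finset.Ico 0 n, r ^ k := by
      rw [← Finset.mul_sum, Finset.sum_range_reflect (r ^ ·) n, Finset.range_eq_Ico]
    _ ≤ C * M * (r ^ 0 / (1 - r)) := by
      have hM : 0 ≤ M := (norm_nonneg _).trans (hy 0)
      exact mul_le_mul_of_nonneg_left (geom_sum_Ico_le_of_lt_one (Real.exp_nonneg _) hr)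
        (mul_nonneg hC hM)
    _ = C * M / (1 - r) := by ring

theorem norm_unstableBack_le_geometric (hP : ∀ m, (P m).comp (P m) = P m)
    (hbij : ∀ m, BijOn (A m) (𝒦 (P m)) (𝒦 (P (m + 1))))
    (hunstable : ∀ m n : ℕ, m ≤ n → ∀ x w : X, w ∈ 𝒦 (P m) →
      calAN A n m w = x - P n x → ‖w‖ ≤ C * Real.exp (-lam * ((n : ℝ) - m)) * ‖x‖)
    (hC : 0 ≤ C) (hlam : 0 < lam) (hy : ∀ k, ‖y k‖ ≤ M) (n j : ℕ) :
    ‖unstableBack A P n (n + j + 1) (y (n + j))‖ ≤ C * M * Real.exp (-lam) ^ j := by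
  have hM : 0 ≤ M := (norm_nonneg _).trans (hy 0)
  have hr : Real.exp (-lam) ^ (j + 1) ≤ Real.exp (-lam) ^ j :=
    pow_le_pow_of_le_one (Real.exp_nonneg _) (Real.exp_le_one_iff.mpr (by linarith)) j.le_succ
  calc ‖unstableBack A P n (n + j + 1) (y (n + j))‖
      ≤ C * Real.exp (-lam) ^ (j + 1) * ‖y (n + j)‖ := by
        simpa [add_assoc] using norm_unstableBack_le hP hbij hunstable (by omega : n ≤ n + j + 1) _
    _ ≤ C * Real.exp (-lam) ^ j * M := by gcongr; exact hy _
    _ = C * M * Real.exp (-lam) ^ j := by ring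

theorem norm_unstableSum_le {K : ℝ} (hlam : 0 < lam)
    (hterm : ∀ j, ‖unstableBack A P n (n + j + 1) (y (n + j))‖ ≤ K * Real.exp (-lam) ^ j) :
    ‖unstableSum A P y n‖ ≤ K / (1 - Real.exp (-lam)) := by
  have hgeom := (hasSum_geometric_of_lt_one (Real.exp_nonneg (-lam))
    (Real.exp_lt_one_iff.mpr (by linarith))).mul_left K
  exact tsum_of_norm_bounded hgeom hterm

theorem unstableSum_succ (hP : ∀ m, (P m).comp (P m) = P m)
    (hbij : ∀ m, BijOn (A m) (𝒦 (P m)) (𝒦 (P (m + 1))))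
    (hsum : Summable fun j => unstableBack A P n (n + j + 1) (y (n + j))) :
    A n (unstableSum A P y n) = unstableSum A P y (n + 1) + (y n - P (n + 1) (y n)) := by
  have hshift : (fun j => A n (unstableBack A P n (n + j + 1) (y (n + j))))
      = fun j => unstableBack A P (n + 1) (n + j + 1) (y (n + j)) :=
    funext fun j => apply_unstableBack hP hbij (by omega) _
  have hsum' := hsum.mapL (A n)
  rw [hshift] at hsum'
  rw [unstableSum, (A n).map_tsum hsum, hshift, hsum'.tsum_eq_zero_add, add_comm]
  simp only [add_zero, unstableBack_self hP hbij, unstableSum, ← add_assoc, add_right_comm n _ 1]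

end Dichotomy

theorem ExpDichotomyN.exists_bounded_solution {X : Type*} [NormedAddCommGroup X]
    [NormedSpace ℂ X] [CompleteSpace X] {A : ℕ → X →L[ℂ] X} {C lam M : ℝ}
    (h : ExpDichotomyN A C lam) (hlam : 0 < lam) {y : ℕ → X} (hy : ∀ n, ‖y n‖ ≤ M) :
    ∃ v : ℕ → X, (∀ n, v (n + 1) = A n (v n) + y n) ∧
      ∀ n, ‖v n‖ ≤ 2 * C * M / (1 - Real.exp (-lam)) := by
  obtain ⟨P, hP, -, hbij, hstable, hunstable⟩ := h
  have hC : 0 ≤ C := by simpa using (norm_nonneg _).trans (hstable 0 0 le_rfl)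
  have hterm := norm_unstableBack_le_geometric hP hbij hunstable hC hlam hy
  have hsum : ∀ n, Summable fun j => unstableBack A P n (n + j + 1) (y (n + j)) := fun n =>
    .of_norm_bounded ((summable_geometric_of_lt_one (Real.exp_nonneg (-lam))
      (Real.exp_lt_one_iff.mpr (by linarith))).mul_left (C * M)) (hterm n)
  refine ⟨fun n => stableSum A P y n - unstableSum A P y n, fun n => ?_, fun n => ?_⟩
  · dsimp only
    rw [stableSum_succ, map_sub, unstableSum_succ hP hbij (hsum n)]
    abel
  · calc ‖stableSum A P y n - unstableSum A P y n‖
        ≤ ‖stableSum A P y n‖ + ‖unstableSum A P y n‖ := norm_sub_le _ _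
      _ ≤ C * M / (1 - Real.exp (-lam)) + C * M / (1 - Real.exp (-lam)) :=
        add_le_add (norm_stableSum_le hstable hC hlam hy n) (norm_unstableSum_le hlam (hterm n))
      _ = 2 * C * M / (1 - Real.exp (-lam)) := by ring

theorem companion_recurrence {a b : ℕ → ℂ} {A : ℕ → (ℂ × ℂ) →L[ℂ] (ℂ × ℂ)}
    (hA : ∀ n : ℕ, ∀ z : ℂ × ℂ, A n z = (z.2, b n * z.1 + a n * z.2))
    {z : ℕ → ℂ × ℂ} (hz : ∀ n, z (n + 1) = A n (z n)) (n : ℕ) :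
    (z (n + 2)).1 = a n * (z (n + 1)).1 + b n * (z n).1 := by
  have hsnd : (z (n + 2)).1 = (z (n + 1)).2 := by rw [hz, hA]
  rw [hsnd, hz, hA]
  dsimp only
  ring

/-- Hyers–Ulam stability for second-order linear recurrences: if the companion-matrix system
`A_n(z₁, z₂) = (z₂, b_n z₁ + a_n z₂)` on `ℂ²` (with the max norm) admits an exponential
dichotomy on `ℤ₀⁺`, then the recurrence `x_{n+2} = a_n x_{n+1} + b_n x_n` has the
`ℓ^∞`-Lipschitz shadowing property. -/
theorem recurrence_hyers_ulam
    (a b : ℕ → ℂ) (A : ℕ → (ℂ × ℂ) →L[ℂ] (ℂ × ℂ))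
    (hA : ∀ n : ℕ, ∀ z : ℂ × ℂ, A n z = (z.2, b n * z.1 + a n * z.2))
    (C lam : ℝ) (hC : 0 < C) (hlam : 0 < lam)
    (h : ExpDichotomyN A C lam) :
    ∃ L : ℝ, 0 < L ∧ ∀ ε : ℝ, 0 < ε → ∀ w : ℕ → ℂ,
      (∀ n : ℕ, ‖w (n + 2) - a n * w (n + 1) - b n * w n‖ ≤ L * ε) →
      ∃ x : ℕ → ℂ, (∀ n : ℕ, x (n + 2) = a n * x (n + 1) + b n * x n) ∧
        ∀ n : ℕ, ‖x n - w n‖ ≤ ε := by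
  have hr : 0 < 1 - Real.exp (-lam) := sub_pos.mpr (Real.exp_lt_one_iff.mpr (by linarith))
  refine ⟨(1 - Real.exp (-lam)) / (2 * C), by positivity, fun ε _ w hw => ?_⟩
  set y : ℕ → ℂ × ℂ := fun n => (0, w (n + 2) - a n * w (n + 1) - b n * w n)
  have hy : ∀ n, ‖y n‖ ≤ (1 - Real.exp (-lam)) / (2 * C) * ε := fun n => by
    simpa [y, Prod.norm_def] using hw n
  obtain ⟨v, hv, hvbound⟩ := h.exists_bounded_solution hlam hy
  set z : ℕ → ℂ × ℂ := fun n => (w n, w (n + 1)) - v n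
  have hz : ∀ n, z (n + 1) = A n (z n) := fun n => by
    ext <;> simp [z, hv, hA, y]
    ring
  refine ⟨fun n => (z n).1, companion_recurrence hA hz, fun n => ?_⟩
  have hε' : 2 * C * ((1 - Real.exp (-lam)) / (2 * C) * ε) / (1 - Real.exp (-lam)) = ε := by
    field_simp
  simpa [z, hε'] using (norm_fst_le (v n)).trans (hvbound n)
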